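/- Let k be an algebraically closed field of characteristic different from 2 and w = (a_0,…,a_5) ∈ V_5 with Cat_{2,2}(x,y:w) ≠ 0. Then there are at most 4 classes [f] ∈ P(V_2^*) of nonzero binary quadratic forms over k such that f² is apolar to w. -/

import Mathlib

/-!
The conditions `(w, f² x) = (w, f² y) = 0` say that `f` is a common zero of the quadratic forms
`fᵀ A₀ f` and `fᵀ A₁ f`, so the points in question lie on the intersection of two conics in `ℙ²`.
Since `Cat_{2,2}(x, y : w) ≠ 0`, some member `B = x A₁ - y A₀` of the pencil is nondegenerate; for a
Hankel pair this forces `A₀, A₁` to be linearly independent, so some `A_j` is not proportional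
to `B`. Over an algebraically closed field of characteristic `≠ 2` every nondegenerate conic is
equivalent to the Veronese conic `x₀ x₂ = x₁²`, parametrised by `(s : t) ↦ (s², st, t²)`.
Pulled back along this parametrisation, `A_j` becomes a binary quartic, which is nonzero because a
conic containing the whole Veronese conic is a multiple of it; so it has at most four zeros in `ℙ¹`.
-/

open Finset

/-- Multiplication of binary forms encoded by coefficient tuples: a binary form
`∑ i, f i • x^(a-i) * y^i` of degree `a` is encoded as the tuple `f : Fin (a+1) → k`,
and multiplication of forms is convolution of coefficient tuples. -/
def formMul {k : Type*} [CommRing k] {a b : ℕ} (f : Fin (a + 1) → k)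
    (g : Fin (b + 1) → k) : Fin (a + b + 1) → k :=
  fun i => ∑ q : Fin (a + 1) × Fin (b + 1),
    if (q.1 : ℕ) + (q.2 : ℕ) = (i : ℕ) then f q.1 * g q.2 else 0

/-- The pairing `(w, v) = ∑ i, w i * v i` between `V_n` and `V_n^*`. -/
def pair {k : Type*} [CommRing k] {n : ℕ} (w v : Fin (n + 1) → k) : k :=
  ∑ i, w i * v i

/-- The catalecticant covariant `Cat_{2,2}(x,y:w) = det (x•A₁ - y•A₀)`, a binary cubic
form, regarded as a polynomial in the two variables `x = X 0` and `y = X 1`. -/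
noncomputable def cat22 {k : Type*} [CommRing k] (w : Fin 6 → k) :
    MvPolynomial (Fin 2) k :=
  Matrix.det (Matrix.of fun i j : Fin 3 =>
    MvPolynomial.X 0 * MvPolynomial.C (w ⟨(i : ℕ) + (j : ℕ) + 1, by omega⟩) -
    MvPolynomial.X 1 * MvPolynomial.C (w ⟨(i : ℕ) + (j : ℕ), by omega⟩))

open Matrix QuadraticMap
open scoped LinearAlgebra.Projectivization

lemma exists_coe_subset_of_card_le_four {α : Type*} [Nonempty α] (T : Finset α)
    (hT : T.card ≤ 4) : ∃ x1 x2 x3 x4 : α, (T : Set α) ⊆ {x1, x2, x3, x4} := by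
  let d := Classical.arbitrary α
  refine ⟨T.toList.getD 0 d, T.toList.getD 1 d, T.toList.getD 2 d, T.toList.getD 3 d,
    fun x hx => ?_⟩
  obtain ⟨n, hn, rfl⟩ := List.mem_iff_getElem.mp (Finset.mem_toList.mpr hx)
  have : n < 4 := hn.trans_le (by simpa using hT)
  interval_cases n <;> simp [List.getElem?_eq_getElem hn]

namespace Polynomial

lemma eval_homogenize_of_snd_eq_zero {R : Type*} [CommSemiring R] (p : R[X]) (d : ℕ)
    {v : Fin 2 → R} (hv : v 1 = 0) :
    MvPolynomial.eval v (p.homogenize d) = p.coeff d * v 0 ^ d := by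
  simp only [homogenize, map_sum, MvPolynomial.eval_monomial,
    Finset.Nat.sum_antidiagonal_eq_sum_range_succ_mk]
  rw [Finset.sum_eq_single d]
  · simp
  · intro i hi hid
    have : d - i ≠ 0 := by have := Finset.mem_range.mp hi; omega
    simp [hv, this]
  · simp

variable {K : Type*} [Field K]

theorem exists_finset_zeros_homogenize {p : K[X]} (hp : p ≠ 0) {d : ℕ} (hd : p.natDegree ≤ d) :
    ∃ T : Finset (ℙ K (Fin 2 → K)), T.card ≤ d ∧
      ∀ v (hv : v ≠ 0), MvPolynomial.eval v (p.homogenize d) = 0 →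
        Projectivization.mk K v hv ∈ T := by
  classical
  have hfin : ![(1 : K), 0] ≠ 0 := fun h => one_ne_zero (congrFun h 0)
  have haff : ∀ r : K, ![r, 1] ≠ 0 := fun r h => one_ne_zero (congrFun h 1)
  set affine := p.roots.toFinset.image (fun r => Projectivization.mk K ![r, 1] (haff r))
  refine ⟨affine ∪ (if p.coeff d = 0 then {Projectivization.mk K ![1, 0] hfin} else ∅), ?_, ?_⟩
  · refine (Finset.card_union_le _ _).trans ?_
    have hroots : affine.card ≤ p.natDegree :=
      Finset.card_image_le.trans (p.roots.toFinset_card_le.trans (card_roots' p))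
    split_ifs with hc
    · have : p.natDegree ≠ d := fun h => hp (leadingCoeff_eq_zero.mp (by rwa [leadingCoeff, h]))
      simp only [Finset.card_singleton]
      omega
    · simpa using hroots.trans hd
  · intro v hv hzero
    by_cases h1 : v 1 = 0
    · have h0 : v 0 ≠ 0 := fun h0 => hv (by ext i; fin_cases i <;> assumption)
      rw [eval_homogenize_of_snd_eq_zero p d h1] at hzero
      have hc : p.coeff d = 0 := (mul_eq_zero.mp hzero).resolve_right (pow_ne_zero _ h0)
      refine Finset.mem_union_right _ ?_
      rw [if_pos hc, Finset.mem_singleton, Projectivization.mk_eq_mk_iff]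
      exact ⟨Units.mk0 (v 0) h0, by ext i; fin_cases i <;> simp [h1]⟩
    · rw [eval_homogenize hd v h1] at hzero
      have hroot : p.eval (v 0 / v 1) = 0 :=
        (mul_eq_zero.mp hzero).resolve_right (pow_ne_zero _ h1)
      refine Finset.mem_union_left _ (Finset.mem_image.mpr ⟨v 0 / v 1, ?_, ?_⟩)
      · exact Multiset.mem_toFinset.mpr ((mem_roots hp).mpr hroot)
      · rw [Projectivization.mk_eq_mk_iff]
        refine ⟨Units.mk0 (v 1)⁻¹ (inv_ne_zero h1), ?_⟩
        ext i; fin_cases i <;> simp [h1, div_eq_inv_mul]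

end Polynomial

lemma QuadraticMap.apply_fin_three {R : Type*} [CommRing R] (Q : QuadraticMap R (Fin 3 → R) R)
    (x : Fin 3 → R) :
    Q x = x 0 ^ 2 * Q (Pi.single 0 1) + x 1 ^ 2 * Q (Pi.single 1 1) + x 2 ^ 2 * Q (Pi.single 2 1)
      + x 0 * x 1 * polar Q (Pi.single 0 1) (Pi.single 1 1)
      + x 0 * x 2 * polar Q (Pi.single 0 1) (Pi.single 2 1)
      + x 1 * x 2 * polar Q (Pi.single 1 1) (Pi.single 2 1) := by
  have hx : x = x 0 • Pi.single 0 1 + x 1 • Pi.single 1 1 + x 2 • Pi.single 2 1 := by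
    ext i; fin_cases i <;> simp
  conv_lhs => rw [hx]
  simp only [QuadraticMap.map_add Q, QuadraticMap.map_smul, polar_add_left, polar_smul_left,
    polar_smul_right, smul_eq_mul]
  ring

section Veronese

open Polynomial

variable {R : Type*} [CommRing R]

def veronese (v : Fin 2 → R) : Fin 3 → R := ![v 0 ^ 2, v 0 * v 1, v 1 ^ 2]

def veroneseForm : QuadraticForm R (Fin 3 → R) := proj 0 2 - proj 1 1

lemma veroneseForm_apply (x : Fin 3 → R) : veroneseForm x = x 0 * x 2 - x 1 * x 1 := rfl

lemma veronese_smul (a : R) (v : Fin 2 → R) : veronese (a • v) = a ^ 2 • veronese v := by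
  ext i; fin_cases i <;> simp [veronese] <;> ring

lemma polar_veroneseForm (x y : Fin 3 → R) :
    polar veroneseForm x y = x 0 * y 2 + x 2 * y 0 - 2 * (x 1 * y 1) := by
  simp only [polar, veroneseForm_apply, Pi.add_apply]
  ring

noncomputable def veroneseRestriction (Q : QuadraticForm R (Fin 3 → R)) : R[X] :=
  C (Q (Pi.single 2 1)) + C (polar Q (Pi.single 1 1) (Pi.single 2 1)) * X
    + C (Q (Pi.single 1 1) + polar Q (Pi.single 0 1) (Pi.single 2 1)) * X ^ 2
    + C (polar Q (Pi.single 0 1) (Pi.single 1 1)) * X ^ 3 + C (Q (Pi.single 0 1)) * X ^ 4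

lemma natDegree_veroneseRestriction_le (Q : QuadraticForm R (Fin 3 → R)) :
    (veroneseRestriction Q).natDegree ≤ 4 := by
  unfold veroneseRestriction; compute_degree

lemma eval_homogenize_veroneseRestriction (Q : QuadraticForm R (Fin 3 → R)) (v : Fin 2 → R) :
    MvPolynomial.eval v ((veroneseRestriction Q).homogenize 4) = Q (veronese v) := by
  simp only [veroneseRestriction, homogenize_add, homogenize_C_mul, homogenize_C,
    homogenize_X_pow (by norm_num : 2 ≤ 4), homogenize_X_pow (by norm_num : 3 ≤ 4),
    homogenize_X_pow le_rfl, homogenize_X (by norm_num : 4 ≠ 0), add_mul, map_add, map_mul,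
    map_pow, MvPolynomial.eval_C, MvPolynomial.eval_X]
  rw [QuadraticMap.apply_fin_three Q (veronese v)]
  simp [veronese]
  ring

lemma eq_smul_veroneseForm_of_veroneseRestriction_eq_zero {Q : QuadraticForm R (Fin 3 → R)}
    (h : veroneseRestriction Q = 0) :
    Q = polar Q (Pi.single 0 1) (Pi.single 2 1) • veroneseForm := by
  have hc : ∀ n, (veroneseRestriction Q).coeff n = 0 := fun n => by rw [h, coeff_zero]
  have h0 := hc 0
  have h1 := hc 1
  have h2 := hc 2
  have h3 := hc 3
  have h4 := hc 4
  simp only [veroneseRestriction, coeff_add, coeff_C_mul, coeff_X_pow, coeff_X, coeff_C]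
    at h0 h1 h2 h3 h4
  norm_num at h0 h1 h2 h3 h4
  ext x
  rw [QuadraticMap.apply_fin_three Q, _root_.smul_apply, veroneseForm_apply]
  linear_combination x 0 ^ 2 * h4 + x 2 ^ 2 * h0 + x 1 ^ 2 * h2 + x 0 * x 1 * h3 + x 1 * x 2 * h1

end Veronese

section Conic

variable {K : Type*} [Field K]

lemma veronese_ne_zero {v : Fin 2 → K} (hv : v ≠ 0) : veronese v ≠ 0 := by
  intro h
  have h0 := congrFun h 0
  have h2 := congrFun h 2
  simp only [veronese, Matrix.cons_val, Pi.zero_apply, pow_eq_zero_iff two_ne_zero] at h0 h2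
  exact hv (by ext i; fin_cases i <;> assumption)

lemma exists_veronese_eq [IsAlgClosed K] {x : Fin 3 → K} (hx : veroneseForm x = 0) :
    ∃ v, veronese v = x := by
  rw [veroneseForm_apply] at hx
  obtain ⟨s, hs⟩ := IsAlgClosed.exists_eq_mul_self (x 0)
  by_cases hs0 : s = 0
  · obtain ⟨t, ht⟩ := IsAlgClosed.exists_eq_mul_self (x 2)
    have h1 : x 1 = 0 := mul_self_eq_zero.mp (by rw [hs, hs0] at hx; linear_combination -hx)
    refine ⟨![0, t], ?_⟩
    ext i; fin_cases i <;> simp [veronese, hs, hs0, h1, ht, pow_two]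
  · have hx2 : (x 1 / s) ^ 2 = x 2 := by
      field_simp
      linear_combination -hx + x 2 * hs
    refine ⟨![s, x 1 / s], ?_⟩
    ext i; fin_cases i <;> simp [veronese, hs, hx2, mul_div_cancel₀ _ hs0, pow_two]

lemma separatingLeft_associated_veroneseForm [Invertible (2 : K)] :
    (associated (veroneseForm (R := K))).SeparatingLeft := by
  intro x hx
  have h2 : (2 : K) ≠ 0 := Invertible.ne_zero 2
  have hpolar : ∀ y, polar veroneseForm x y = 0 := fun y => by
    rw [← polarBilin_apply_apply, ← two_nsmul_associated K, LinearMap.smul_apply,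
      LinearMap.smul_apply, hx y, smul_zero]
  have hx0 : x 0 = 0 := by simpa [polar_veroneseForm] using hpolar (Pi.single 2 1)
  have hx1 : x 1 = 0 := by simpa [polar_veroneseForm, h2] using hpolar (Pi.single 1 1)
  have hx2 : x 2 = 0 := by simpa [polar_veroneseForm] using hpolar (Pi.single 0 1)
  ext i; fin_cases i <;> assumption

theorem exists_finset_card_le_four_of_conic [IsAlgClosed K] [Invertible (2 : K)]
    {Q Q' : QuadraticForm K (Fin 3 → K)} (hQ : (associated Q).SeparatingLeft)
    (hQ' : ∀ a : K, Q' ≠ a • Q) :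
    ∃ T : Finset (ℙ K (Fin 3 → K)), T.card ≤ 4 ∧
      ∀ f (hf : f ≠ 0), Q f = 0 → Q' f = 0 → Projectivization.mk K f hf ∈ T := by
  classical
  obtain ⟨e⟩ : veroneseForm.Equivalent Q := QuadraticForm.equivalent_of_isAlgClosed _ _
    separatingLeft_associated_veroneseForm hQ
  set Qe := Q'.comp (e : (Fin 3 → K) →ₗ[K] Fin 3 → K)
  have hQe : veroneseRestriction Qe ≠ 0 := by
    intro h
    apply hQ' (polar Qe (Pi.single 0 1) (Pi.single 2 1))
    ext y
    have := congr($(eq_smul_veroneseForm_of_veroneseRestriction_eq_zero h) (e.symm y))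
    simpa [Qe, ← e.map_app (e.symm y)] using this
  obtain ⟨T, hT, hmem⟩ :=
    Polynomial.exists_finset_zeros_homogenize hQe (natDegree_veroneseRestriction_le Qe)
  have hne : ∀ x : ℙ K (Fin 2 → K), e (veronese x.rep) ≠ 0 := fun x =>
    (map_ne_zero_iff e e.injective).mpr (veronese_ne_zero x.rep_nonzero)
  refine ⟨T.image fun x => Projectivization.mk K _ (hne x), Finset.card_image_le.trans hT, ?_⟩
  intro f hf hQf hQ'f
  obtain ⟨v, hv⟩ := exists_veronese_eq (x := e.symm f) (by rwa [← e.map_app, e.apply_symm_apply])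
  have hv0 : v ≠ 0 := by
    rintro rfl
    exact hf (by rw [← e.apply_symm_apply f, ← hv]; simp [veronese])
  refine Finset.mem_image.mpr ⟨Projectivization.mk K v hv0, hmem v hv0 ?_, ?_⟩
  · rw [eval_homogenize_veroneseRestriction]
    simpa [Qe, hv] using hQ'f
  · obtain ⟨a, ha⟩ := Projectivization.exists_smul_eq_mk_rep K v hv0
    rw [Projectivization.mk_eq_mk_iff]
    refine ⟨a ^ 2, ?_⟩
    rw [← ha, Units.smul_def a v, veronese_smul, hv]
    simp [Units.smul_def]

end Conic

section Symmetric

variable {R n : Type*} [CommRing R] [Invertible (2 : R)] [Fintype n] [DecidableEq n]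

lemma Matrix.IsSymm.associated_toQuadraticForm' {M : Matrix n n R} (hM : M.IsSymm) :
    associated M.toQuadraticForm' = Matrix.toLinearMap₂' R M :=
  associated_left_inverse R fun x y => by
    rw [toLinearMap₂'_apply', toLinearMap₂'_apply', dotProduct_mulVec, ← mulVec_transpose,
      hM.eq, dotProduct_comm]

lemma Matrix.IsSymm.toMatrix'_toQuadraticForm' {M : Matrix n n R} (hM : M.IsSymm) :
    M.toQuadraticForm'.toMatrix' = M := by
  rw [QuadraticForm.toMatrix', hM.associated_toQuadraticForm', LinearMap.toMatrix'_toLinearMap₂']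

end Symmetric

lemma Matrix.toQuadraticForm'_apply {R n : Type*} [CommRing R] [Fintype n] [DecidableEq n]
    (M : Matrix n n R) (x : n → R) : M.toQuadraticForm' x = x ⬝ᵥ M *ᵥ x :=
  toLinearMap₂'_apply' M x x

def hankel {R : Type*} (w : Fin 6 → R) (j : Fin 2) : Matrix (Fin 3) (Fin 3) R :=
  Matrix.of fun i l => w ⟨i + l + j, by omega⟩

lemma hankel_isSymm {R : Type*} (w : Fin 6 → R) (j : Fin 2) : (hankel w j).IsSymm :=
  Matrix.IsSymm.ext fun i l => by simp only [hankel, of_apply, Nat.add_comm (l : ℕ)]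

lemma isSymm_smul_hankel_sub_smul_hankel {R : Type*} [CommRing R] (w : Fin 6 → R) (x y : R) :
    (x • hankel w 1 - y • hankel w 0).IsSymm :=
  ((hankel_isSymm w 1).smul x).sub ((hankel_isSymm w 0).smul y)

section Hankel

variable {k : Type*} [CommRing k]

lemma pair_formMul_self_mul (w : Fin 6 → k) (f : Fin 3 → k) (h : Fin 2 → k) :
    pair w (formMul (formMul f f) h) =
      h 0 * (hankel w 0).toQuadraticForm' f + h 1 * (hankel w 1).toQuadraticForm' f := by
  simp [pair, formMul, Fin.sum_univ_succ, Fintype.sum_prod_type, Matrix.toQuadraticForm'_apply,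
    dotProduct, mulVec, hankel]
  ring

lemma eval_cat22 (w : Fin 6 → k) (v : Fin 2 → k) :
    MvPolynomial.eval v (cat22 w) = (v 0 • hankel w 1 - v 1 • hankel w 0).det := by
  rw [cat22, RingHom.map_det]
  congr 1
  ext i l
  simp [hankel]

end Hankel

section HankelField

variable {k : Type*} [Field k] {w : Fin 6 → k} {x y : k}

-- A relation `s A₀ + t A₁ = 0` between Hankel matrices puts `(s, t, 0)` in the kernel of every
-- member of the pencil.
lemma linearIndependent_hankel (hdet : (x • hankel w 1 - y • hankel w 0).det ≠ 0) :
    LinearIndependent k ![hankel w 0, hankel w 1] := by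
  rw [LinearIndependent.pair_iff]
  intro s t hst
  have hrel : ∀ i l, s * hankel w 0 i l + t * hankel w 1 i l = 0 := fun i l => by
    simpa using congrFun (congrFun hst i) l
  by_contra hne
  refine hdet (exists_mulVec_eq_zero_iff.mp ⟨![s, t, 0], fun h => hne ?_, ?_⟩)
  · simpa using And.intro (congrFun h 0) (congrFun h 1)
  · have r0 := hrel 0 0
    have r1 := hrel 0 1
    have r2 := hrel 0 2
    have r3 := hrel 1 2
    simp [hankel] at r0 r1 r2 r3
    ext i; fin_cases i <;> simp [mulVec, dotProduct, Fin.sum_univ_three, hankel]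
    · linear_combination x * r1 - y * r0
    · linear_combination x * r2 - y * r1
    · linear_combination x * r3 - y * r2

lemma exists_toQuadraticForm'_hankel_ne_smul [Invertible (2 : k)]
    (hdet : (x • hankel w 1 - y • hankel w 0).det ≠ 0) :
    ∃ j, ∀ a : k, (hankel w j).toQuadraticForm' ≠
      a • (x • hankel w 1 - y • hankel w 0).toQuadraticForm' := by
  have hind := linearIndependent_hankel hdet
  rw [LinearIndependent.pair_iff] at hind
  set B := x • hankel w 1 - y • hankel w 0 with hBdef
  have hB : B.IsSymm := isSymm_smul_hankel_sub_smul_hankel w x y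
  clear_value B
  have hprop : ∀ j a, (hankel w j).toQuadraticForm' = a • B.toQuadraticForm' →
      hankel w j = a • B := fun j a h => by
    rw [← (hankel_isSymm w j).toMatrix'_toQuadraticForm', h, QuadraticForm.toMatrix'_smul,
      hB.toMatrix'_toQuadraticForm']
  by_contra! h
  obtain ⟨a₀, h₀⟩ := h 0
  obtain ⟨a₁, h₁⟩ := h 1
  obtain ⟨rfl, ha₀⟩ := hind a₁ (-a₀) (by rw [hprop 0 a₀ h₀, hprop 1 a₁ h₁]; module)
  obtain rfl := neg_eq_zero.mp ha₀
  have hA₀ : hankel w 0 = 0 := by simpa using hprop 0 0 h₀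
  have hA₁ : hankel w 1 = 0 := by simpa using hprop 1 0 h₁
  exact hdet (by simp [hBdef, hA₀, hA₁])

end HankelField

/-- Over an algebraically closed field of characteristic different from two, if the
catalecticant covariant of `w ∈ V₅` is nonzero, then there are at most `4` classes
`[f] ∈ ℙ(V₂^*)` of nonzero binary quadratic forms with `f²` apolar to `w`. -/
theorem stmt18 {k : Type*} [Field k] [IsAlgClosed k] (hchar : (2 : k) ≠ 0)
    (w : Fin 6 → k) (hcat : cat22 w ≠ 0) :
    ∃ x1 x2 x3 x4 : Projectivization k (Fin 3 → k),
      {x : Projectivization k (Fin 3 → k) |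
        ∃ (f : Fin 3 → k) (hf : f ≠ 0), Projectivization.mk k f hf = x ∧
          ∀ h : Fin 2 → k, pair w (formMul (formMul f f) h) = 0} ⊆
        {x1, x2, x3, x4} := by
  let := invertibleOfNonzero hchar
  obtain ⟨v, hv⟩ : ∃ v, MvPolynomial.eval v (cat22 w) ≠ 0 := by
    by_contra! h
    exact hcat (MvPolynomial.funext fun x => by simp [h x])
  rw [eval_cat22] at hv
  set B := v 0 • hankel w 1 - v 1 • hankel w 0
  have hB : (associated B.toQuadraticForm').SeparatingLeft := by
    rw [(isSymm_smul_hankel_sub_smul_hankel w _ _).associated_toQuadraticForm']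
    exact LinearMap.separatingLeft_toLinearMap₂'_iff_det_ne_zero.mpr hv
  obtain ⟨j, hj⟩ := exists_toQuadraticForm'_hankel_ne_smul hv
  obtain ⟨T, hT, hmem⟩ := exists_finset_card_le_four_of_conic hB hj
  have : Nonempty (ℙ k (Fin 3 → k)) := ⟨Projectivization.mk k (Pi.single 0 1) (by simp)⟩
  obtain ⟨x1, x2, x3, x4, hsub⟩ := exists_coe_subset_of_card_le_four T hT
  refine ⟨x1, x2, x3, x4, Set.Subset.trans ?_ hsub⟩
  rintro _ ⟨f, hf, rfl, hap⟩
  have h₀ : (hankel w 0).toQuadraticForm' f = 0 := by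
    simpa [pair_formMul_self_mul] using hap ![1, 0]
  have h₁ : (hankel w 1).toQuadraticForm' f = 0 := by
    simpa [pair_formMul_self_mul] using hap ![0, 1]
  refine hmem f hf ?_ (by fin_cases j <;> assumption)
  rw [Matrix.toQuadraticForm'_apply] at h₀ h₁ ⊢
  simp [B, sub_mulVec, smul_mulVec, h₀, h₁]
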